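/- arXiv:2311.15631 — 2 statements merged into one kernel-verified Lean document; each statement's English description precedes it below -/
import Mathlib

section
/- There is no 3×3 matrix M with non-negative integer entries satisfying M^2 = I + M. More generally, there is no n×n integer matrix M with M^2 = I + M for any odd n. -/
/-!
If `M ^ 2 = 1 + M` then `(2 • M - 1) ^ 2 = 5`, so `det (2 • M - 1) ^ 2 = 5 ^ n` for an `n × n`
matrix. Over `ℤ` this forces `n` to be even, since `5` is prime and the multiplicity of `5` in a
square is even.
-/

theorem Prime.even_of_sq_eq_pow {α : Type*} [CommMonoidWithZero α] [IsCancelMulZero α] {p a : α}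
    (hp : Prime p) {n : ℕ} (h : a ^ 2 = p ^ n) : Even n := by
  have hmult := emultiplicity_pow hp (a := a) (k := 2)
  rw [h, emultiplicity_pow_self_of_prime hp] at hmult
  cases hm : emultiplicity p a with
  | top => simp [hm] at hmult
  | coe m => exact ⟨m, by rw [hm] at hmult; norm_cast at hmult; omega⟩

namespace Matrix

variable {ι R : Type*} [Fintype ι] [DecidableEq ι] [CommRing R]

theorem sq_two_smul_sub_one_of_sq_eq_one_add {M : Matrix ι ι R} (hM : M ^ 2 = 1 + M) :
    (2 • M - 1) ^ 2 = (5 : R) • (1 : Matrix ι ι R) := by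
  have hexpand : (2 • M - 1) ^ 2 = 4 • M ^ 2 - 4 • M + 1 := by noncomm_ring
  rw [hexpand, hM]
  module

theorem det_two_smul_sub_one_sq_of_sq_eq_one_add {M : Matrix ι ι R} (hM : M ^ 2 = 1 + M) :
    (2 • M - 1).det ^ 2 = 5 ^ Fintype.card ι := by
  rw [← det_pow, sq_two_smul_sub_one_of_sq_eq_one_add hM, det_smul, det_one, mul_one]

theorem even_card_of_sq_eq_one_add {M : Matrix ι ι ℤ} (hM : M ^ 2 = 1 + M) :
    Even (Fintype.card ι) :=
  have prime_five : Prime (5 : ℤ) := Int.prime_iff_natAbs_prime.mpr (by norm_num)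
  prime_five.even_of_sq_eq_pow (det_two_smul_sub_one_sq_of_sq_eq_one_add hM)

end Matrix

theorem no_odd_dim_nimrep_fib :
    (¬ ∃ M : Matrix (Fin 3) (Fin 3) ℕ, M ^ 2 = 1 + M) ∧
    (∀ n : ℕ, Odd n → ¬ ∃ M : Matrix (Fin n) (Fin n) ℤ, M ^ 2 = 1 + M) := by
  have odd_dim : ∀ n : ℕ, Odd n → ¬ ∃ M : Matrix (Fin n) (Fin n) ℤ, M ^ 2 = 1 + M := by
    rintro n hn ⟨M, hM⟩
    have heven := Matrix.even_card_of_sq_eq_one_add hM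
    rw [Fintype.card_fin] at heven
    exact Nat.not_even_iff_odd.mpr hn heven
  refine ⟨?_, odd_dim⟩
  rintro ⟨M, hM⟩
  refine odd_dim 3 ⟨1, rfl⟩ ⟨(Int.ofNatHom.mapMatrix : Matrix (Fin 3) (Fin 3) ℕ →+* _) M, ?_⟩
  rw [← map_pow, hM, map_add, map_one]
end

section
/- Let a = sin(5π/7)/sin(π/7) and b = sin(3π/7)/sin(π/7). The pairs of natural numbers (m, n) satisfying (1 + m·a + n·b)^2 ≤ 7/(4·sin^2(π/7)) are exactly (0,0) and (1,0). -/
open Real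

lemma psu25_pow_bounds :
    0.4487988 < Real.pi / 7 ∧ Real.pi / 7 < 0.4487990 ∧
    0.2014203 < (Real.pi / 7) ^ 2 ∧ (Real.pi / 7) ^ 2 < 0.2014206 ∧
    (Real.pi / 7) ^ 3 < 0.090398 ∧ 0.090397 < (Real.pi / 7) ^ 3 ∧
    (Real.pi / 7) ^ 4 < 0.04058 := by
  have h1 : 3.141592 < Real.pi := Real.pi_gt_d6
  have h2 : Real.pi < 3.141593 := Real.pi_lt_d6
  have l1 : (0.4487988:ℝ) < Real.pi / 7 := by linarith
  have l2 : Real.pi / 7 < 0.4487990 := by linarith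
  have hlo : (0:ℝ) ≤ (0.4487988:ℝ) := by norm_num
  have hx0 : (0:ℝ) ≤ Real.pi / 7 := by linarith
  have u2 := pow_lt_pow_left₀ l2 hx0 (two_ne_zero)
  have u3 := pow_lt_pow_left₀ l2 hx0 (three_ne_zero)
  have u4 := pow_lt_pow_left₀ l2 hx0 (n := 4) (by norm_num)
  have d2 := pow_lt_pow_left₀ l1 hlo (two_ne_zero)
  have d3 := pow_lt_pow_left₀ l1 hlo (three_ne_zero)
  norm_num at u2 u3 u4 d2 d3
  refine ⟨l1, l2, by linarith, by linarith, by linarith, by linarith, by linarith⟩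

lemma psu25_s_bounds : 0.431 < Real.sin (Real.pi / 7) ∧ Real.sin (Real.pi / 7) < 0.436 := by
  obtain ⟨l1, l2, q1, q2, c2, c1, f1⟩ := psu25_pow_bounds
  have hx : |Real.pi / 7| ≤ 1 := by rw [abs_of_pos (by linarith)]; linarith
  have hb := abs_le.mp (Real.sin_bound hx)
  rw [abs_of_pos (by linarith : (0:ℝ) < Real.pi / 7)] at hb
  have f0 : (0:ℝ) ≤ (Real.pi / 7) ^ 4 := by positivity
  constructor <;> linarith [hb.1, hb.2, pow_le_pow_of_le_one (a := Real.pi / 7) (by linarith) (by linarith) (by norm_num : 4 ≤ 5)]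

lemma psu25_c_bounds : 0.897 < Real.cos (Real.pi / 7) ∧ Real.cos (Real.pi / 7) < 0.902 := by
  obtain ⟨l1, l2, q1, q2, c2, c1, f1⟩ := psu25_pow_bounds
  have hx : |Real.pi / 7| ≤ 1 := by rw [abs_of_pos (by linarith)]; linarith
  have hb := abs_le.mp (Real.cos_bound hx)
  rw [abs_of_pos (by linarith : (0:ℝ) < Real.pi / 7)] at hb
  have f0 : (0:ℝ) ≤ (Real.pi / 7) ^ 4 := by positivity
  constructor <;> linarith [hb.1, hb.2]

lemma psu25_t_bounds : 0.9746 < Real.cos (Real.pi / 14) ∧ Real.cos (Real.pi / 14) < 0.975 := by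
  have h1 : 3.141592 < Real.pi := Real.pi_gt_d6
  have h2 : Real.pi < 3.141593 := Real.pi_lt_d6
  have l1 : (0.2243994:ℝ) < Real.pi / 14 := by linarith
  have l2 : Real.pi / 14 < 0.2243995 := by linarith
  have hlo : (0:ℝ) ≤ (0.2243994:ℝ) := by norm_num
  have hx0 : (0:ℝ) ≤ Real.pi / 14 := by linarith
  have u2 := pow_lt_pow_left₀ l2 hx0 (two_ne_zero)
  have u4 := pow_lt_pow_left₀ l2 hx0 (n := 4) (by norm_num)
  have d2 := pow_lt_pow_left₀ l1 hlo (two_ne_zero)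
  norm_num at u2 u4 d2
  have f0 : (0:ℝ) ≤ (Real.pi / 14) ^ 4 := by positivity
  have hx : |Real.pi / 14| ≤ 1 := by rw [abs_of_pos (by linarith)]; linarith
  have hb := abs_le.mp (Real.cos_bound hx)
  rw [abs_of_pos (by linarith : (0:ℝ) < Real.pi / 14)] at hb
  constructor <;> linarith [hb.1, hb.2]

set_option maxHeartbeats 800000 in
theorem psu25_etale_candidates (m n : ℕ) :
    (1 + m * (Real.sin (5 * Real.pi / 7) / Real.sin (Real.pi / 7))
       + n * (Real.sin (3 * Real.pi / 7) / Real.sin (Real.pi / 7))) ^ 2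
      ≤ 7 / (4 * Real.sin (Real.pi / 7) ^ 2) ↔
    ((m, n) = (0, 0) ∨ (m, n) = (1, 0)) := by
  obtain ⟨hs1, hs2⟩ := psu25_s_bounds
  obtain ⟨hc1, hc2⟩ := psu25_c_bounds
  obtain ⟨ht1, ht2⟩ := psu25_t_bounds
  have hspos : (0:ℝ) < Real.sin (Real.pi / 7) := by linarith
  have h5 : Real.sin (5 * Real.pi / 7)
      = 2 * Real.sin (Real.pi / 7) * Real.cos (Real.pi / 7) := by
    have e : Real.sin (5 * Real.pi / 7) = Real.sin (Real.pi - 5 * Real.pi / 7) := by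
      rw [Real.sin_pi_sub]
    rw [e, show Real.pi - 5 * Real.pi / 7 = 2 * (Real.pi / 7) by ring, Real.sin_two_mul]
  have h3 : Real.sin (3 * Real.pi / 7) = Real.cos (Real.pi / 14) := by
    rw [show 3 * Real.pi / 7 = Real.pi / 2 - Real.pi / 14 by ring, Real.sin_pi_div_two_sub]
  have hA : Real.sin (5 * Real.pi / 7) / Real.sin (Real.pi / 7)
      = 2 * Real.cos (Real.pi / 7) := by
    rw [h5]; field_simp
  rw [hA, h3]
  set s := Real.sin (Real.pi / 7) with hsdef
  set c := Real.cos (Real.pi / 7) with hcdef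
  set t := Real.cos (Real.pi / 14) with htdef
  have hts : (2.23 : ℝ) < t / s := by
    rw [lt_div_iff₀ hspos]; nlinarith
  constructor
  · intro h
    by_contra hcon
    push_neg at hcon
    obtain ⟨h00, h10⟩ := hcon
    have hbound : 7 / (4 * s ^ 2) < 9.43 := by
      rw [div_lt_iff₀ (by positivity)]; nlinarith
    have hm0 : (0:ℝ) ≤ (m:ℝ) := Nat.cast_nonneg m
    have hc0 : (0:ℝ) < c := by linarith
    rcases Nat.eq_zero_or_pos n with hn | hn
    · subst hn
      have hm : 2 ≤ m := by
        by_contra hlt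
        push_neg at hlt
        interval_cases m
        · exact h00 rfl
        · exact h10 rfl
      have hm' : (2:ℝ) ≤ (m:ℝ) := by exact_mod_cast hm
      have hmc : (2:ℝ) * 0.897 ≤ (m:ℝ) * c := by nlinarith
      have hv : (4.588 : ℝ) ≤ 1 + (m:ℝ) * (2 * c) + ((0:ℕ):ℝ) * (t / s) := by
        push_cast; nlinarith
      nlinarith [hv, hbound, h]
    · have hn' : (1:ℝ) ≤ (n:ℝ) := by exact_mod_cast hn
      have hnts : (2.23:ℝ) ≤ (n:ℝ) * (t / s) := by nlinarith
      have hmc : (0:ℝ) ≤ (m:ℝ) * (2 * c) := by positivity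
      have hv : (3.23 : ℝ) ≤ 1 + (m:ℝ) * (2 * c) + (n:ℝ) * (t / s) := by linarith
      nlinarith [hv, hbound, h]
  · rintro (h | h) <;> obtain ⟨hm, hn⟩ := Prod.mk.injEq .. ▸ h
    · subst hm; subst hn
      rw [le_div_iff₀ (by positivity)]
      push_cast
      nlinarith
    · subst hm; subst hn
      rw [le_div_iff₀ (by positivity)]
      push_cast
      have e1 : (1 + 2 * c) ^ 2 < 7.8625 := by nlinarith
      have e2 : s ^ 2 < 0.1902 := by nlinarith
      have e3 : ((1:ℝ) + 1 * (2 * c) + 0 * (t / s)) = 1 + 2 * c := by ring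
      rw [e3]
      nlinarith [sq_nonneg s, sq_nonneg (1 + 2 * c), e1, e2]
end
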